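/- arXiv:1502.06543 — 4 statements merged into one kernel-verified Lean document; each statement's English description precedes it below -/
import Mathlib

section
/- Let q > 1 be a real number, let m ≥ 1 and k > m be integers with k − m even, set n := (k − m)/2, and let ω be a complex number with |ω| = 1. Then the product ∏_{i=1}^{n} ( ([i]_q · [m+i]_q) / ([m+2i]_q · [m+2i−1]_q) ) · ( q^{m+2i} + q^{−(m+2i)} − ω² − ω^{−2} ) is a strictly positive real number. -/
/-- The quantum integer `[n]_q = (q^n - q^{-n})/(q - q^{-1})`. -/
noncomputable def qint (q : ℝ) (n : ℕ) : ℝ :=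
  (q ^ (n : ℤ) - q ^ (-(n : ℤ))) / (q - q⁻¹)

/-!
Every factor is a positive real. The quantum integers are positive for `q > 1`, and since
`|ω| = 1` we have `ω⁻² = conj ω²`, so `ω² + ω⁻² = 2 Re ω² ≤ 2 < q^N + q^{-N}`.
-/

lemma qint_pos {q : ℝ} (hq : 1 < q) {n : ℕ} (hn : 0 < n) : 0 < qint q n := by
  have hn' : -(n : ℤ) < n := by omega
  have hqinv : q⁻¹ < q := (inv_lt_one_of_one_lt₀ hq).trans hq
  exact div_pos (sub_pos.2 (zpow_lt_zpow_right₀ hq hn')) (sub_pos.2 hqinv)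

lemma two_lt_add_inv {x : ℝ} (hx : 1 < x) : 2 < x + x⁻¹ := by
  have hx0 : 0 < x := one_pos.trans hx
  have : x + x⁻¹ - 2 = (x - 1) ^ 2 / x := by field_simp; ring
  have : 0 < (x - 1) ^ 2 / x := by positivity
  linarith

lemma Complex.exists_pos_prod_eq_ofReal {ι : Type*} (s : Finset ι) (f : ι → ℂ)
    (h : ∀ i ∈ s, ∃ r : ℝ, 0 < r ∧ f i = r) : ∃ r : ℝ, 0 < r ∧ ∏ i ∈ s, f i = r := by
  induction s using Finset.cons_induction with
  | empty => exact ⟨1, one_pos, by simp⟩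
  | cons a s ha ih =>
    obtain ⟨r, hr, hfa⟩ := h a (Finset.mem_cons_self a s)
    obtain ⟨t, ht, hs⟩ := ih fun i hi => h i (Finset.mem_cons_of_mem hi)
    exact ⟨r * t, mul_pos hr ht, by rw [Finset.prod_cons, hfa, hs, Complex.ofReal_mul]⟩

lemma exists_pos_rotation_factor_eq_ofReal {q : ℝ} (hq : 1 < q) {N : ℕ} (hN : 0 < N)
    {ω : ℂ} (hω : ‖ω‖ = 1) :
    ∃ r : ℝ, 0 < r ∧ (q : ℂ) ^ (N : ℤ) + (q : ℂ) ^ (-(N : ℤ)) - ω ^ 2 - ω ^ (-2 : ℤ) = r := by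
  have hqN : 1 < q ^ (N : ℤ) := one_lt_zpow₀ hq (by omega)
  have hω2 : ‖ω ^ 2‖ = 1 := by rw [norm_pow, hω, one_pow]
  have hre : (ω ^ 2).re ≤ 1 := hω2 ▸ Complex.re_le_norm (ω ^ 2)
  refine ⟨q ^ (N : ℤ) + q ^ (-(N : ℤ)) - 2 * (ω ^ 2).re, ?_, ?_⟩
  · have := two_lt_add_inv hqN
    rw [zpow_neg]
    linarith
  · have hconj : ω ^ 2 + ω ^ (-2 : ℤ) = ((2 * (ω ^ 2).re : ℝ) : ℂ) := by
      rw [zpow_neg, zpow_ofNat, Complex.inv_eq_conj hω2, Complex.add_conj]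
    rw [sub_sub, hconj]
    push_cast
    ring

theorem lowest_weight_m_coefficient_pos_general (q : ℝ) (hq : 1 < q)
    (m k : ℕ)
    (ω : ℂ) (hω : ‖ω‖ = 1) :
    ∃ r : ℝ, 0 < r ∧
      (∏ i ∈ Finset.Icc 1 ((k - m) / 2),
          (((qint q i * qint q (m + i)) /
              (qint q (m + 2 * i) * qint q (m + 2 * i - 1)) : ℝ) : ℂ) *
            ((q : ℂ) ^ ((m + 2 * i : ℕ) : ℤ) + (q : ℂ) ^ (-((m + 2 * i : ℕ) : ℤ))
              - ω ^ 2 - ω ^ (-2 : ℤ))) = (r : ℂ) := by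
  refine Complex.exists_pos_prod_eq_ofReal _ _ fun i hi => ?_
  have hi : 0 < i := (Finset.mem_Icc.1 hi).1
  have hcoeff : 0 < qint q i * qint q (m + i) / (qint q (m + 2 * i) * qint q (m + 2 * i - 1)) :=
    div_pos (mul_pos (qint_pos hq hi) (qint_pos hq (by omega)))
      (mul_pos (qint_pos hq (by omega)) (qint_pos hq (by omega)))
  obtain ⟨r, hr, hfactor⟩ := exists_pos_rotation_factor_eq_ofReal hq (N := m + 2 * i) (by omega) hω
  exact ⟨_ * r, mul_pos hcoeff hr, by rw [hfactor, Complex.ofReal_mul]⟩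

theorem lowest_weight_m_coefficient_pos (q : ℝ) (hq : 1 < q)
    (m k : ℕ) (hm : 1 ≤ m) (hk : m < k) (he : Even (k - m))
    (ω : ℂ) (hω : ‖ω‖ = 1) :
    ∃ r : ℝ, 0 < r ∧
      (∏ i ∈ Finset.Icc 1 ((k - m) / 2),
          (((qint q i * qint q (m + i)) /
              (qint q (m + 2 * i) * qint q (m + 2 * i - 1)) : ℝ) : ℂ) *
            ((q : ℂ) ^ ((m + 2 * i : ℕ) : ℤ) + (q : ℂ) ^ (-((m + 2 * i : ℕ) : ℤ))
              - ω ^ 2 - ω ^ (-2 : ℤ))) = (r : ℂ) :=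
  lowest_weight_m_coefficient_pos_general q hq m k ω hω
end

section
/- Let G be a group and g ∈ G. The ℂ-linear map from the group algebra ℂ[Z_G(g)] of the centralizer Z_G(g) = {z ∈ G : zg = gz} to the algebra D determined on group elements by z ↦ e_{(g,z)} is an injective ℂ-algebra homomorphism (sending the identity of ℂ[Z_G(g)] to the idempotent e_{(g,1)}), and its image equals the corner e_{(g,1)} · D · e_{(g,1)}. -/
/-!
For `z` in the centralizer `Z` of `g`, the product rule of the tube algebra reads
`e_{(g,z)} e_{(g,w)} = e_{(g,zw)}`, so `z ↦ e_{(g,z)}` is multiplicative and extends to an algebra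
map on `ℂ[Z]`; it is injective because distinct `z` give distinct basis vectors. Sandwiching a
basis vector gives `e_{(g,1)} e_{(h,w)} e_{(g,1)} = e_{(g,w)}` when `h = g` and `w ∈ Z`, and `0`
otherwise, so the corner is spanned by exactly the image of `Z`.
-/

theorem mul_mul_inv_eq_self_iff_mem_centralizer_singleton {G : Type*} [Group G] {g z : G} :
    z * g * z⁻¹ = g ↔ z ∈ Subgroup.centralizer ({g} : Set G) := by
  rw [Subgroup.mem_centralizer_singleton_iff, mul_inv_eq_iff_eq_mul]

theorem MonoidAlgebra.map_mul_of_map_single_mul_single {k M A : Type*} [CommSemiring k] [Mul M]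
    [NonUnitalNonAssocSemiring A] [Module k A] [IsScalarTower k A A] [SMulCommClass k A A]
    (φ : MonoidAlgebra k M →ₗ[k] A)
    (h : ∀ m n : M, φ (single (m * n) 1) = φ (single m 1) * φ (single n 1))
    (x y : MonoidAlgebra k M) :
    φ (x * y) = φ x * φ y := by
  let ψ := liftMagma k (⟨fun m => φ (single m 1), h⟩ : M →ₙ* A)
  have hφψ : φ = (ψ : MonoidAlgebra k M →ₗ[k] A) :=
    (MonoidAlgebra.basis M k).ext fun m => by simp [ψ]
  rw [hφψ]
  exact map_mul ψ x y

section TubeAlgebra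

variable {k G D : Type*} [CommSemiring k] [Group G] [DecidableEq G] [NonUnitalSemiring D]
  [Module k D]

def IsTubeAlgebraBasis (e : Module.Basis (G × G) k D) : Prop :=
  ∀ h w g z : G, e (h, w) * e (g, z) = if h = z * g * z⁻¹ then e (g, w * z) else 0

variable {e : Module.Basis (G × G) k D}

theorem IsTubeAlgebraBasis.mul_of_mem_centralizer (he : IsTubeAlgebraBasis e) {g w : G}
    (z : G) (hw : w ∈ Subgroup.centralizer ({g} : Set G)) :
    e (g, z) * e (g, w) = e (g, z * w) := by
  rw [he, if_pos (mul_mul_inv_eq_self_iff_mem_centralizer_singleton.mpr hw).symm]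

theorem IsTubeAlgebraBasis.corner_apply (he : IsTubeAlgebraBasis e) (g h w : G) :
    e (g, 1) * e (h, w) * e (g, 1) =
      if h = g ∧ w * g * w⁻¹ = g then e (g, w) else 0 := by
  rw [he g 1 h w, one_mul, ite_mul, zero_mul, he h w g 1]
  simp only [inv_one, mul_one, one_mul]
  by_cases hhg : h = g
  · simp [hhg, eq_comm (a := g)]
  · simp [hhg]

theorem IsTubeAlgebraBasis.range_corner [IsScalarTower k D D] [SMulCommClass k D D]
    (he : IsTubeAlgebraBasis e) (g : G) :
    LinearMap.range (LinearMap.mulLeftRight k (e (g, 1), e (g, 1))) =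
      Submodule.span k
        (Set.range fun z : Subgroup.centralizer ({g} : Set G) => e (g, (z : G))) := by
  rw [LinearMap.range_eq_map, ← e.span_eq, Submodule.map_span]
  apply le_antisymm
  · rw [Submodule.span_le]
    rintro _ ⟨_, ⟨⟨h, w⟩, rfl⟩, rfl⟩
    rw [SetLike.mem_coe, LinearMap.mulLeftRight_apply, he.corner_apply]
    split_ifs with hcorner
    · exact Submodule.subset_span
        ⟨⟨w, mul_mul_inv_eq_self_iff_mem_centralizer_singleton.mp hcorner.2⟩, rfl⟩
    · exact zero_mem _
  · rw [Submodule.span_le]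
    rintro _ ⟨z, rfl⟩
    refine Submodule.subset_span ⟨e (g, z), ⟨_, rfl⟩, ?_⟩
    rw [LinearMap.mulLeftRight_apply, he.corner_apply, if_pos
      ⟨rfl, mul_mul_inv_eq_self_iff_mem_centralizer_singleton.mpr z.2⟩]

end TubeAlgebra

/-- The tube algebra of `G`-Vec: a (non-unital) ℂ-algebra `D` with a basis
`e_{(g,z)}` indexed by `G × G` and multiplication
`e_{(h,w)} · e_{(g,z)} = e_{(g,wz)}` if `h = zgz⁻¹` and `0` otherwise.
The ℂ-linear map from the group algebra of the centralizer of `g` determined by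
`z ↦ e_{(g,z)}` is an injective algebra homomorphism onto the corner
`e_{(g,1)} · D · e_{(g,1)}`. -/
theorem tube_algebra_centralizer_corner {G : Type*} [Group G] [DecidableEq G]
    {D : Type*} [NonUnitalRing D] [Module ℂ D]
    [SMulCommClass ℂ D D] [IsScalarTower ℂ D D]
    (e : Module.Basis (G × G) ℂ D)
    (hmul : ∀ h w g z : G,
      e (h, w) * e (g, z) = if h = z * g * z⁻¹ then e (g, w * z) else 0)
    (g : G)
    (φ : MonoidAlgebra ℂ ↥(Subgroup.centralizer ({g} : Set G)) →ₗ[ℂ] D)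
    (hφ : ∀ z : ↥(Subgroup.centralizer ({g} : Set G)),
      φ (MonoidAlgebra.single z (1 : ℂ)) = e (g, (z : G))) :
    (∀ x y, φ (x * y) = φ x * φ y) ∧ Function.Injective φ ∧
      φ 1 = e (g, 1) ∧
      Set.range φ = Set.range (fun y : D => e (g, 1) * y * e (g, 1)) := by
  have he : IsTubeAlgebraBasis e := hmul
  have hφ_basis : φ ∘ MonoidAlgebra.basis _ ℂ =
      fun z : Subgroup.centralizer ({g} : Set G) => e (g, (z : G)) :=
    funext hφ
  refine ⟨MonoidAlgebra.map_mul_of_map_single_mul_single φ fun z w => ?_, ?_, hφ 1, ?_⟩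
  · rw [hφ, hφ, hφ, Subgroup.coe_mul, he.mul_of_mem_centralizer _ w.2]
  · refine LinearMap.injective_of_linearIndependent (MonoidAlgebra.basis _ ℂ).span_eq ?_
    rw [hφ_basis]
    exact e.linearIndependent.comp _ fun z w hzw => Subtype.ext (congrArg Prod.snd hzw)
  · change Set.range φ = Set.range (LinearMap.mulLeftRight ℂ (e (g, 1), e (g, 1)))
    rw [← LinearMap.coe_range, ← LinearMap.coe_range, he.range_corner, LinearMap.range_eq_map,
      ← (MonoidAlgebra.basis _ ℂ).span_eq, Submodule.map_span, ← Set.range_comp,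
      hφ_basis]
end

section
/- Let G be a group and g, h ∈ G. The corner e_{(h,1)} · D · e_{(g,1)} equals the ℂ-linear span of {e_{(g,z)} : z ∈ G, z g z^{−1} = h}. In particular, e_{(h,1)} · D · e_{(g,1)} ≠ 0 if and only if g and h are conjugate in G. -/
/-!
Multiplying a basis vector `e (a, z)` by `e (h, 1)` on the left and `e (g, 1)` on the right
gives `e (g, z)` when `a = g` and `z g z⁻¹ = h`, and `0` otherwise. Since the two-sided
multiplication map is linear, its range is spanned by these images, i.e. by the `e (g, z)` with
`z g z⁻¹ = h`; and this span is nonzero exactly when such a `z` exists, the basis vectors being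
nonzero.
-/

theorem Module.Basis.range_mul_mul {ι R D : Type*} [CommSemiring R] [NonUnitalSemiring D]
    [Module R D] [SMulCommClass R D D] [IsScalarTower R D D] (b : Module.Basis ι R D) (a c : D) :
    Set.range (fun y : D => a * y * c) = Submodule.span R (Set.range fun i => a * b i * c) := by
  let f : D →ₗ[R] D := (LinearMap.mulLeft R a).comp (LinearMap.mulRight R c)
  have hf : ∀ y, f y = a * y * c := fun y => (mul_assoc a y c).symm
  have hrange : LinearMap.range f = Submodule.span R (Set.range fun i => a * b i * c) := by
    rw [LinearMap.range_eq_map, ← b.span_eq, Submodule.map_span, ← Set.range_comp]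
    simp only [Function.comp_def, hf]
  rw [← hrange, LinearMap.coe_range]
  exact congrArg Set.range (funext hf).symm

section TubeAlgebra

variable {G D : Type*} [Group G] [DecidableEq G] [NonUnitalSemiring D]

theorem tube_corner_mul_basis (e : G × G → D)
    (hmul : ∀ h w g z : G,
      e (h, w) * e (g, z) = if h = z * g * z⁻¹ then e (g, w * z) else 0)
    (g h a z : G) :
    e (h, 1) * e (a, z) * e (g, 1) = if a = g ∧ z * g * z⁻¹ = h then e (g, z) else 0 := by
  by_cases hconj : h = z * a * z⁻¹
  · by_cases ha : a = g
    · subst ha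
      simp [hmul, ← hconj]
    · simp [hmul, hconj, ha]
  · by_cases ha : a = g
    · subst ha
      simp [hmul, hconj, Ne.symm hconj]
    · simp [hmul, hconj, ha]

theorem tube_corner_range_eq_span {R : Type*} [CommSemiring R] [Module R D]
    [SMulCommClass R D D] [IsScalarTower R D D] (e : Module.Basis (G × G) R D)
    (hmul : ∀ h w g z : G,
      e (h, w) * e (g, z) = if h = z * g * z⁻¹ then e (g, w * z) else 0)
    (g h : G) :
    Set.range (fun y : D => e (h, 1) * y * e (g, 1))
      = Submodule.span R {x : D | ∃ z : G, z * g * z⁻¹ = h ∧ x = e (g, z)} := by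
  rw [e.range_mul_mul]
  congr 1
  apply le_antisymm
  · refine (Submodule.span_mono ?_).trans Submodule.span_insert_zero.le
    rintro _ ⟨⟨a, z⟩, rfl⟩
    dsimp only
    rw [tube_corner_mul_basis e hmul]
    split_ifs with hc
    · exact Or.inr ⟨z, hc.2, hc.1 ▸ rfl⟩
    · exact Or.inl rfl
  · refine Submodule.span_mono ?_
    rintro _ ⟨z, hz, rfl⟩
    exact ⟨(g, z), by simp [tube_corner_mul_basis e hmul, hz]⟩

end TubeAlgebra

/-- In the tube algebra `D` of `G`-Vec (basis `e_{(g,z)}`, `g, z ∈ G`, with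
`e_{(h,w)} · e_{(g,z)} = e_{(g,wz)}` if `h = zgz⁻¹` and `0` otherwise), the
corner `e_{(h,1)} · D · e_{(g,1)}` is the linear span of
`{e_{(g,z)} : z g z⁻¹ = h}`; in particular it is nonzero iff `g` and `h` are
conjugate. -/
theorem tube_algebra_corner_span {G : Type*} [Group G] [DecidableEq G]
    {D : Type*} [NonUnitalRing D] [Module ℂ D]
    [SMulCommClass ℂ D D] [IsScalarTower ℂ D D]
    (e : Module.Basis (G × G) ℂ D)
    (hmul : ∀ h w g z : G,
      e (h, w) * e (g, z) = if h = z * g * z⁻¹ then e (g, w * z) else 0)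
    (g h : G) :
    Set.range (fun y : D => e (h, 1) * y * e (g, 1))
        = (Submodule.span ℂ {x : D | ∃ z : G, z * g * z⁻¹ = h ∧ x = e (g, z)} : Set D)
      ∧ ((∃ y : D, e (h, 1) * y * e (g, 1) ≠ 0) ↔ IsConj g h) := by
  have hcorner := tube_corner_range_eq_span e hmul g h
  refine ⟨hcorner, ?_⟩
  calc (∃ y : D, e (h, 1) * y * e (g, 1) ≠ 0)
      ↔ ∃ x ∈ Set.range (fun y : D => e (h, 1) * y * e (g, 1)), x ≠ 0 := by simp
    _ ↔ Submodule.span ℂ {x : D | ∃ z : G, z * g * z⁻¹ = h ∧ x = e (g, z)} ≠ ⊥ := by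
      rw [hcorner, Submodule.ne_bot_iff]
      rfl
    _ ↔ ∃ z : G, z * g * z⁻¹ = h := by
      rw [Ne, Submodule.span_eq_bot]
      simp [e.ne_zero]
    _ ↔ IsConj g h := isConj_iff.symm
end

section
/- Let G be a group and g ∈ G an element whose conjugacy class Γ = {a ∈ G : a is conjugate to g} is finite. Let D_Γ be the ℂ-linear span of {e_{(a,z)} : a ∈ Γ, z ∈ G} inside D. Then D_Γ is a ℂ-subalgebra of D, and D_Γ is isomorphic as a ℂ-algebra to the algebra of Γ × Γ matrices with entries in the group algebra ℂ[Z_G(g)] of the centralizer Z_G(g) = {z ∈ G : zg = gz}. -/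
/-!
Fix for every `a ∈ Γ` a conjugator `x_a` with `x_a g x_a⁻¹ = a`. The basis vector `e_{(a,z)}`
of `D_Γ` is sent to the matrix unit at `(z a z⁻¹, a)` with entry `x_{zaz⁻¹}⁻¹ z x_a ∈ Z_G(g)`;
this is a bijection between the two bases. The centralizer entries multiply like a cocycle,
`x_{wbw⁻¹}⁻¹ w x_b · x_b⁻¹ z x_a = x_{wbw⁻¹}⁻¹ (w z) x_a` for `b = z a z⁻¹`, so the structure
constants of `D_Γ` and of the matrix algebra agree, and bilinearity extends this from the bases
to everything.
-/

open Submodule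

section SpanMul

variable {R A : Type*} [CommSemiring R] [NonUnitalNonAssocSemiring A] [Module R A]
  [SMulCommClass R A A] [IsScalarTower R A A]

theorem Submodule.mul_mem_span_of_mul_mem {s : Set A}
    (hs : ∀ x ∈ s, ∀ y ∈ s, x * y ∈ span R s) {x y : A} (hx : x ∈ span R s)
    (hy : y ∈ span R s) : x * y ∈ span R s :=
  span_le.mpr (Set.image2_subset_iff.mpr hs)
    (map₂_span_span R (LinearMap.mul R A) s s ▸ apply_mem_map₂ (LinearMap.mul R A) hx hy)

theorem Submodule.map_mul_of_basis {ι N : Type*} [NonUnitalNonAssocSemiring N] [Module R N]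
    [SMulCommClass R N N] [IsScalarTower R N N] {p : Submodule R A}
    (hp : ∀ x ∈ p, ∀ y ∈ p, x * y ∈ p) (b : Module.Basis ι R p) (f : p →ₗ[R] N)
    (hf : ∀ i j, f ⟨b i * b j, hp _ (b i).2 _ (b j).2⟩ = f (b i) * f (b j)) (x y : p) :
    f ⟨x * y, hp x x.2 y y.2⟩ = f x * f y := by
  let mul : p →ₗ[R] p →ₗ[R] p := LinearMap.mk₂ R (fun x y => ⟨x * y, hp x x.2 y y.2⟩)
    (fun _ _ _ => Subtype.ext (add_mul _ _ _)) (fun _ _ _ => Subtype.ext (smul_mul_assoc _ _ _))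
    (fun _ _ _ => Subtype.ext (mul_add _ _ _)) (fun _ _ _ => Subtype.ext (mul_smul_comm _ _ _))
  have h : mul.compr₂ f = (LinearMap.mul R N).compl₁₂ f f := LinearMap.ext_basis b b hf
  exact LinearMap.congr_fun₂ h x y

end SpanMul

namespace Module.Basis

variable {ι R M : Type*} [Semiring R] [AddCommMonoid M] [Module R M]

noncomputable def spanImage (e : Basis ι R M) (S : Set ι) : Basis S R (span R (e '' S)) :=
  (Basis.span (e.linearIndependent.comp _ Subtype.val_injective)).map
    (LinearEquiv.ofEq _ _ (by rw [Set.image_eq_range]; rfl))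

@[simp]
theorem spanImage_apply (e : Basis ι R M) (S : Set ι) (i : S) : (e.spanImage S i : M) = e i := by
  simp [spanImage, Basis.span_apply]

end Module.Basis

section ConjIndex

variable {G : Type*} [Group G] {g : G}

noncomputable def IsConj.conjugator {a : G} (h : IsConj g a) : G := (isConj_iff.mp h).choose

theorem IsConj.conjugator_mul_mul_inv {a : G} (h : IsConj g a) :
    h.conjugator * g * h.conjugator⁻¹ = a :=
  (isConj_iff.mp h).choose_spec

theorem Subgroup.inv_mul_mul_mem_centralizer_singleton {x y z : G}
    (h : z * (y * g * y⁻¹) * z⁻¹ = x * g * x⁻¹) :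
    x⁻¹ * z * y ∈ Subgroup.centralizer ({g} : Set G) := by
  rw [Subgroup.mem_centralizer_singleton_iff]
  calc x⁻¹ * z * y * g = x⁻¹ * (z * (y * g * y⁻¹) * z⁻¹) * z * y := by group
    _ = g * (x⁻¹ * z * y) := by rw [h]; group

theorem IsConj.conjugator_congr {a b : G} (ha : IsConj g a) (hb : IsConj g b) (h : a = b) :
    ha.conjugator = hb.conjugator := by
  subst h; rfl

theorem IsConj.conj_mul_mul_inv {a : G} (ha : IsConj g a) (z : G) : IsConj g (z * a * z⁻¹) :=
  ha.trans (isConj_iff.mpr ⟨z, rfl⟩)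

theorem IsConj.conjugator_inv_mul_mul {a : G} (ha : IsConj g a) :
    ha.conjugator⁻¹ * a * ha.conjugator = g := by
  nth_rw 2 [← ha.conjugator_mul_mul_inv]
  group

theorem IsConj.conjugator_mul_conj {a b u : G} (ha : IsConj g a) (hb : IsConj g b)
    (hu : u ∈ Subgroup.centralizer ({g} : Set G)) :
    hb.conjugator * u * ha.conjugator⁻¹ * a * (hb.conjugator * u * ha.conjugator⁻¹)⁻¹ = b := by
  rw [Subgroup.mem_centralizer_singleton_iff] at hu
  calc _ = hb.conjugator * u * (ha.conjugator⁻¹ * a * ha.conjugator) * u⁻¹ * hb.conjugator⁻¹ := by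
        group
    _ = hb.conjugator * (u * g) * u⁻¹ * hb.conjugator⁻¹ := by rw [ha.conjugator_inv_mul_mul]; group
    _ = hb.conjugator * g * hb.conjugator⁻¹ := by rw [hu]; group
    _ = b := hb.conjugator_mul_mul_inv

variable (g) in
noncomputable def conjIndexEquiv :
    {p : G × G | IsConj g p.1} ≃
      {a // IsConj g a} × {a // IsConj g a} × Subgroup.centralizer ({g} : Set G) where
  toFun p :=
    (⟨_, p.2.conj_mul_mul_inv p.1.2⟩, ⟨p.1.1, p.2⟩,
      ⟨(p.2.conj_mul_mul_inv p.1.2).conjugator⁻¹ * p.1.2 * p.2.conjugator,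
        Subgroup.inv_mul_mul_mem_centralizer_singleton
          (by rw [IsConj.conjugator_mul_mul_inv, IsConj.conjugator_mul_mul_inv])⟩)
  invFun x := ⟨(x.2.1, x.1.2.conjugator * x.2.2 * x.2.1.2.conjugator⁻¹), x.2.1.2⟩
  left_inv p := Subtype.ext (Prod.ext rfl (by simp only; group))
  right_inv := by
    rintro ⟨b, a, u⟩
    have hb := a.2.conjugator_mul_conj b.2 u.2
    refine Prod.ext (Subtype.ext hb) (Prod.ext rfl (Subtype.ext ?_))
    simp only
    rw [IsConj.conjugator_congr _ b.2 hb]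
    group

variable [DecidableEq G] [Fintype {a // IsConj g a}] {k : Type*} [Semiring k]

theorem matrix_basis_conjIndexEquiv_mul (p q : {p : G × G | IsConj g p.1}) :
    (MonoidAlgebra.basis _ k).matrix _ _ (conjIndexEquiv g p) *
        (MonoidAlgebra.basis _ k).matrix _ _ (conjIndexEquiv g q) =
      if p.1.1 = q.1.2 * q.1.1 * q.1.2⁻¹ then
        (MonoidAlgebra.basis _ k).matrix _ _ (conjIndexEquiv g ⟨(q.1.1, p.1.2 * q.1.2), q.2⟩)
      else 0 := by
  obtain ⟨⟨h, w⟩, hp⟩ := p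
  obtain ⟨⟨a, z⟩, hq⟩ := q
  simp only [conjIndexEquiv, Equiv.coe_fn_mk, Module.Basis.matrix_apply,
    MonoidAlgebra.basis_apply]
  split_ifs with hc
  · subst hc
    rw [Matrix.single_mul_single_same, MonoidAlgebra.single_mul_single, one_mul]
    have hrow : w * (z * a * z⁻¹) * w⁻¹ = w * z * a * (w * z)⁻¹ := by group
    congr 1
    · exact Subtype.ext hrow
    · congr 1
      ext
      simp only [Subgroup.coe_mul]
      rw [IsConj.conjugator_congr _ (IsConj.conj_mul_mul_inv hq (w * z)) hrow]
      group
  · rw [Matrix.single_mul_single_of_ne]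
    exact fun h' => hc (congrArg Subtype.val h')

end ConjIndex

theorem mul_mem_span_conj_of_mul_eq_ite {G R D : Type*} [Group G] [DecidableEq G]
    [CommSemiring R] [NonUnitalNonAssocSemiring D] [Module R D] [SMulCommClass R D D]
    [IsScalarTower R D D]
    (e : Module.Basis (G × G) R D)
    (hmul : ∀ h w a z : G, e (h, w) * e (a, z) = if h = z * a * z⁻¹ then e (a, w * z) else 0)
    (g : G) : ∀ x ∈ span R (e '' {p : G × G | IsConj g p.1}),
      ∀ y ∈ span R (e '' {p : G × G | IsConj g p.1}),
        x * y ∈ span R (e '' {p : G × G | IsConj g p.1}) := by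
  refine fun x hx y hy => mul_mem_span_of_mul_mem ?_ hx hy
  rintro _ ⟨⟨h, w⟩, -, rfl⟩ _ ⟨⟨a, z⟩, ha, rfl⟩
  rw [hmul]
  split_ifs
  exacts [subset_span ⟨(a, w * z), ha, rfl⟩, zero_mem _]

/-- In the tube algebra `D` of `G`-Vec (basis `e_{(g,z)}`, with
`e_{(h,w)} · e_{(g,z)} = e_{(g,wz)}` if `h = zgz⁻¹` and `0` otherwise), if the
conjugacy class `Γ` of `g` is finite, then the span `D_Γ` of
`{e_{(a,z)} : a ∈ Γ, z ∈ G}` is a subalgebra, and it is isomorphic as a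
ℂ-algebra to `Γ × Γ` matrices over the group algebra of the centralizer of
`g`. -/
theorem tube_algebra_conjugacy_block {G : Type*} [Group G] [DecidableEq G]
    {D : Type*} [NonUnitalRing D] [Module ℂ D]
    [SMulCommClass ℂ D D] [IsScalarTower ℂ D D]
    (e : Module.Basis (G × G) ℂ D)
    (hmul : ∀ h w g z : G,
      e (h, w) * e (g, z) = if h = z * g * z⁻¹ then e (g, w * z) else 0)
    (g : G) [Fintype {a : G // IsConj g a}] :
    ∃ (hclosed : ∀ x ∈ Submodule.span ℂ {x : D | ∃ a z : G, IsConj g a ∧ x = e (a, z)},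
        ∀ y ∈ Submodule.span ℂ {x : D | ∃ a z : G, IsConj g a ∧ x = e (a, z)},
          x * y ∈ Submodule.span ℂ {x : D | ∃ a z : G, IsConj g a ∧ x = e (a, z)})
      (f : ↥(Submodule.span ℂ {x : D | ∃ a z : G, IsConj g a ∧ x = e (a, z)}) ≃ₗ[ℂ]
        Matrix {a : G // IsConj g a} {a : G // IsConj g a}
          (MonoidAlgebra ℂ ↥(Subgroup.centralizer ({g} : Set G)))),
      ∀ (x y : ↥(Submodule.span ℂ {x : D | ∃ a z : G, IsConj g a ∧ x = e (a, z)})),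
        f ⟨(x : D) * (y : D), hclosed x x.2 y y.2⟩ = f x * f y := by
  have hs : {x : D | ∃ a z : G, IsConj g a ∧ x = e (a, z)} = e '' {p : G × G | IsConj g p.1} := by
    ext x
    simp [eq_comm]
  rw [hs]
  have hclosed := mul_mem_span_conj_of_mul_eq_ite e hmul g
  let b := e.spanImage {p : G × G | IsConj g p.1}
  refine ⟨hclosed, b.equiv ((MonoidAlgebra.basis _ ℂ).matrix _ _) (conjIndexEquiv g),
    map_mul_of_basis hclosed b _ fun p q => ?_⟩
  have hpq : (⟨b p * b q, hclosed _ (b p).2 _ (b q).2⟩ :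
      span ℂ (e '' {p : G × G | IsConj g p.1})) =
      if p.1.1 = q.1.2 * q.1.1 * q.1.2⁻¹ then b ⟨(q.1.1, p.1.2 * q.1.2), q.2⟩ else 0 := by
    apply Subtype.ext
    simp only [b, Module.Basis.spanImage_apply, hmul]
    split_ifs <;> simp only [Module.Basis.spanImage_apply, ZeroMemClass.coe_zero]
  simp only [hpq, LinearEquiv.coe_coe, Module.Basis.equiv_apply, matrix_basis_conjIndexEquiv_mul]
  split_ifs
  exacts [Module.Basis.equiv_apply _ _ _ _, map_zero _]
end
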